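/- arXiv:1302.2463 — 7 statements merged into one kernel-verified Lean document; each statement's English description precedes it below -/
import Mathlib

section
/- Let P = {x ∈ ℝⁿ : ⟨aᵢ,x⟩ + bᵢ ≥ 0, i = 1,…,m} with a₁,…,aₘ spanning ℝⁿ, and suppose P is nonempty and bounded. Then there exist positive reals α₁,…,αₘ with α₁a₁ + ⋯ + αₘaₘ = 0. -/
/-!
Boundedness of the nonempty polyhedron makes its recession cone `{y | ∀ i, 0 ≤ ⟨aᵢ, y⟩}` trivial,
so no nonzero linear functional is nonnegative on all the `aᵢ`. This is the dual side of
Stiemke's alternative: if the kernel of `T : α ↦ ∑ αᵢ • aᵢ` missed the open positive orthant,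
a Hahn–Banach functional separating the two would vanish on `ker T`, hence factor as `g ∘ T`,
and `-g` would be a nonzero functional nonnegative on every `aᵢ`.
-/

open Set Bornology

theorem Bornology.IsBounded.eq_zero_of_forall_add_smul_mem {E : Type*} [NormedAddCommGroup E]
    [NormedSpace ℝ E] {s : Set E} (hs : IsBounded s) {x y : E}
    (hxy : ∀ t : ℝ, 0 ≤ t → x + t • y ∈ s) : y = 0 := by
  obtain ⟨R, hR⟩ := isBounded_iff_forall_norm_le.mp hs
  by_contra hy
  have hy_pos : 0 < ‖y‖ := norm_pos_iff.mpr hy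
  have hx : ‖x‖ ≤ R := by simpa using hR _ (hxy 0 le_rfl)
  set t := (2 * R + 1) / ‖y‖
  have ht : 0 ≤ t := div_nonneg (by linarith [norm_nonneg x]) hy_pos.le
  have hty : ‖t • y‖ = 2 * R + 1 := by
    rw [norm_smul, Real.norm_of_nonneg ht, div_mul_cancel₀ _ hy_pos.ne']
  have := calc ‖t • y‖ = ‖(x + t • y) - x‖ := by rw [add_sub_cancel_left]
    _ ≤ ‖x + t • y‖ + ‖x‖ := norm_sub_le _ _
    _ ≤ R + R := add_le_add (hR _ (hxy t ht)) hx
  linarith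

theorem eq_zero_of_isBounded_polyhedron {ι κ : Type*} [Fintype κ] (a : ι → κ → ℝ) (b : ι → ℝ)
    {x : κ → ℝ} (hx : ∀ i, 0 ≤ a i ⬝ᵥ x + b i)
    (hbdd : IsBounded {x : κ → ℝ | ∀ i, 0 ≤ a i ⬝ᵥ x + b i})
    {y : κ → ℝ} (hy : ∀ i, 0 ≤ a i ⬝ᵥ y) : y = 0 :=
  hbdd.eq_zero_of_forall_add_smul_mem (x := x) fun t ht i => by
    rw [dotProduct_add, dotProduct_smul, smul_eq_mul]
    linarith [hx i, mul_nonneg ht (hy i)]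

theorem LinearMap.map_eq_zero_of_forall_le_map {E : Type*} [AddCommGroup E] [Module ℝ E]
    (f : E →ₗ[ℝ] ℝ) {p : Submodule ℝ E} {u : ℝ} (hf : ∀ v ∈ p, u ≤ f v) {v : E} (hv : v ∈ p) :
    f v = 0 := by
  by_contra hfv
  have := hf (((u - 1) / f v) • v) (p.smul_mem _ hv)
  rw [map_smul, smul_eq_mul, div_mul_cancel₀ _ hfv] at this
  linarith

theorem ContinuousLinearMap.map_single_nonpos_of_forall_pos {ι : Type*} [Fintype ι]
    [DecidableEq ι] (f : StrongDual ℝ (ι → ℝ)) (hf : ∀ α : ι → ℝ, (∀ i, 0 < α i) → f α < 0)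
    (i : ι) : f (Pi.single i 1) ≤ 0 := by
  have hclosure : closure (univ.pi fun _ : ι => Ioi (0 : ℝ)) ⊆ {α | f α ≤ 0} :=
    (closure_mono fun α hα => hf α (mem_univ_pi.mp hα)).trans
      (closure_lt_subset_le f.continuous continuous_const)
  rw [closure_pi_set] at hclosure
  refine hclosure fun j _ => ?_
  by_cases h : j = i
  · subst h; simp
  · simp [h]

theorem exists_pos_sum_smul_eq_zero {ι E : Type*} [Fintype ι] [AddCommGroup E] [Module ℝ E]
    (a : ι → E) (ha : ∀ g : Module.Dual ℝ E, (∀ i, 0 ≤ g (a i)) → g = 0) :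
    ∃ α : ι → ℝ, (∀ i, 0 < α i) ∧ ∑ i, α i • a i = 0 := by
  classical
  set T := Fintype.linearCombination ℝ a
  by_contra hno
  have hdisj : Disjoint (univ.pi fun _ : ι => Ioi (0 : ℝ)) (LinearMap.ker T) := by
    refine Set.disjoint_left.mpr fun α hα hker => hno ⟨α, mem_univ_pi.mp hα, ?_⟩
    rwa [SetLike.mem_coe, LinearMap.mem_ker, Fintype.linearCombination_apply] at hker
  obtain ⟨f, u, hf_orthant, hf_ker⟩ := geometric_hahn_banach_open
    (convex_pi fun _ _ => convex_Ioi 0) (isOpen_set_pi finite_univ fun _ _ => isOpen_Ioi)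
    (LinearMap.ker T).convex hdisj
  have hf_neg : ∀ α : ι → ℝ, (∀ i, 0 < α i) → f α < 0 := fun α hα =>
    (hf_orthant α fun i _ => hα i).trans_le (by simpa using hf_ker 0 (LinearMap.ker T).zero_mem)
  obtain ⟨g, hg⟩ : f.toLinearMap ∈ LinearMap.range T.dualMap := by
    rw [LinearMap.range_dualMap_eq_dualAnnihilator_ker, Submodule.mem_dualAnnihilator]
    exact fun v hv => f.toLinearMap.map_eq_zero_of_forall_le_map hf_ker hv
  have hg_zero : -g = 0 := ha (-g) fun i => by
    have := f.map_single_nonpos_of_forall_pos hf_neg i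
    rw [← ContinuousLinearMap.coe_coe, ← hg, LinearMap.dualMap_apply,
      Fintype.linearCombination_apply_single, one_smul] at this
    simpa using this
  have := hf_neg 1 fun _ => one_pos
  rw [← ContinuousLinearMap.coe_coe, ← hg, neg_eq_zero.mp hg_zero] at this
  simp at this

theorem stmt4_general (m n : ℕ) (a : Fin m → (Fin n → ℝ)) (b : Fin m → ℝ)
    (hne : ({x : Fin n → ℝ | ∀ i, 0 ≤ (∑ j, a i j * x j) + b i}).Nonempty)
    (hbdd : Bornology.IsBounded {x : Fin n → ℝ | ∀ i, 0 ≤ (∑ j, a i j * x j) + b i}) :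
    ∃ α : Fin m → ℝ, (∀ i, 0 < α i) ∧ ∑ i, α i • a i = 0 := by
  obtain ⟨x, hx⟩ := hne
  refine exists_pos_sum_smul_eq_zero a fun g hg => ?_
  obtain ⟨y, rfl⟩ := (dotProductEquiv ℝ (Fin n)).surjective g
  have hy : y = 0 := eq_zero_of_isBounded_polyhedron a b hx hbdd fun i => by
    simpa [dotProduct_comm] using hg i
  rw [hy, map_zero]

/-- If the polyhedron `P = {x : ⟨aᵢ,x⟩ + bᵢ ≥ 0}` (with `a₁,…,aₘ` spanning `ℝⁿ`)
is nonempty and bounded, then there is a vanishing positive linear combination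
of the normal vectors. -/
theorem stmt4 (m n : ℕ) (a : Fin m → (Fin n → ℝ)) (b : Fin m → ℝ)
    (hspan : Submodule.span ℝ (Set.range a) = ⊤)
    (hne : ({x : Fin n → ℝ | ∀ i, 0 ≤ (∑ j, a i j * x j) + b i}).Nonempty)
    (hbdd : Bornology.IsBounded {x : Fin n → ℝ | ∀ i, 0 ≤ (∑ j, a i j * x j) + b i}) :
    ∃ α : Fin m → ℝ, (∀ i, 0 < α i) ∧ ∑ i, α i • a i = 0 :=
  stmt4_general m n a b hne hbdd
end

section
/- Suppose δ ∈ ℝ^{m−n} lies in the cone generated by γ₁,…,γₘ ∈ ℝ^{m−n}, and suppose that whenever δ lies in the cone generated by a subset {γ_{i₁},…,γ_{i_k}}, one has k ≥ m−n. Then for every point z in Z = {z ∈ ℂᵐ : Σₖ γₖ|zₖ|² = δ}, the set of vectors {γₖ : zₖ ≠ 0} spans ℝ^{m−n}. -/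
/-!
Conic Carathéodory: a nonnegative combination `Σ μᵢ vᵢ` can be rewritten as a nonnegative
combination supported on a linearly independent subfamily of the support of `μ`. Indeed, a
linear relation `Σ gᵢ vᵢ = 0` among the support, with some `gᵢ > 0`, lets us replace `μ` by
`μ - t g` for the least ratio `t = μₖ / gₖ` with `gₖ > 0`, which stays nonnegative and kills the
`k`-th coefficient.

Applied to `δ = Σ |zₖ|² γₖ`, this yields a linearly independent family of vectors `γₖ` with
`zₖ ≠ 0` whose cone contains `δ`; by hypothesis it has at least `m - n` members, so it spans.
-/

section ConicCaratheodory

variable {ι 𝕜 E : Type*} [Field 𝕜] [LinearOrder 𝕜] [IsStrictOrderedRing 𝕜]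
  [AddCommGroup E] [Module 𝕜 E]

lemma exists_sub_smul_nonneg_apply_eq_mul [Finite ι] {μ g : ι → 𝕜} (hμ : 0 ≤ μ)
    (hg : ∃ i, 0 < g i) : ∃ (t : 𝕜) (k : ι), 0 < g k ∧ 0 ≤ μ - t • g ∧ μ k = t * g k := by
  obtain ⟨k, hk, hmin⟩ :=
    Set.exists_min_image {i | 0 < g i} (fun i => μ i / g i) (Set.toFinite _) hg
  refine ⟨μ k / g k, k, hk, fun i => ?_, (div_mul_cancel₀ _ hk.ne').symm⟩
  have ht : 0 ≤ μ k / g k := div_nonneg (hμ k) hk.le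
  simp only [Pi.zero_apply, Pi.sub_apply, Pi.smul_apply, smul_eq_mul, sub_nonneg]
  rcases le_or_gt (g i) 0 with hgi | hgi
  · exact (mul_nonpos_of_nonneg_of_nonpos ht hgi).trans (hμ i)
  · exact (le_div_iff₀ hgi).mp (hmin i hgi)

lemma exists_support_subset_sum_smul_eq_zero_of_not_linearIndepOn [Fintype ι] {v : ι → E}
    {s : Set ι} (h : ¬LinearIndepOn 𝕜 v s) :
    ∃ g : ι → 𝕜, Function.support g ⊆ s ∧ ∑ i, g i • v i = 0 ∧ ∃ i, 0 < g i := by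
  simp only [linearIndepOn_iff'', not_forall, exists_prop] at h
  obtain ⟨t, g, hts, hgt, hsum, i, hi, hgi⟩ := h
  have hsupp : Function.support g ⊆ s := fun j hj => hts (by_contra fun hjt => hj (hgt j hjt))
  have hsum' : ∑ i, g i • v i = 0 := by
    rw [← hsum]
    exact (Finset.sum_subset (Finset.subset_univ t) fun j _ hj => by simp [hgt j hj]).symm
  rcases Ne.lt_or_gt hgi with hneg | hpos
  · refine ⟨-g, by rwa [Function.support_neg], ?_, i, by simpa using hneg⟩
    simp [neg_smul, Finset.sum_neg_distrib, hsum']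
  · exact ⟨g, hsupp, hsum', i, hpos⟩

lemma exists_nonneg_support_ssubset_sum_smul_eq [Fintype ι] {v : ι → E} {μ : ι → 𝕜}
    (hμ : 0 ≤ μ) (h : ¬LinearIndepOn 𝕜 v (Function.support μ)) :
    ∃ ν : ι → 𝕜, 0 ≤ ν ∧ Function.support ν ⊂ Function.support μ ∧
      ∑ i, ν i • v i = ∑ i, μ i • v i := by
  obtain ⟨g, hgμ, hg0, hgpos⟩ := exists_support_subset_sum_smul_eq_zero_of_not_linearIndepOn h
  obtain ⟨t, k, hk, hν, hμk⟩ := exists_sub_smul_nonneg_apply_eq_mul hμ hgpos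
  refine ⟨μ - t • g, hν, ?_, ?_⟩
  · refine (Set.ssubset_iff_of_subset fun i hi => ?_).mpr ⟨k, hgμ hk.ne', by simp [hμk]⟩
    by_contra hμi
    have hgi : g i = 0 := Function.notMem_support.mp fun hgi => hμi (hgμ hgi)
    exact hi (by simp [Function.notMem_support.mp hμi, hgi])
  · simp only [Pi.sub_apply, Pi.smul_apply, smul_eq_mul, sub_smul, mul_smul,
      Finset.sum_sub_distrib, ← Finset.smul_sum, hg0, smul_zero, sub_zero]

theorem exists_nonneg_linearIndepOn_support_sum_smul_eq [Fintype ι] (v : ι → E) {μ : ι → 𝕜}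
    (hμ : 0 ≤ μ) : ∃ ν : ι → 𝕜, 0 ≤ ν ∧ Function.support ν ⊆ Function.support μ ∧
      LinearIndepOn 𝕜 v (Function.support ν) ∧ ∑ i, ν i • v i = ∑ i, μ i • v i := by
  induction hn : (Function.support μ).ncard using Nat.strong_induction_on generalizing μ with
  | _ n ih =>
  by_cases hind : LinearIndepOn 𝕜 v (Function.support μ)
  · exact ⟨μ, hμ, subset_rfl, hind, rfl⟩
  obtain ⟨ν, hν, hsupp, hsum⟩ := exists_nonneg_support_ssubset_sum_smul_eq hμ hind
  obtain ⟨ρ, hρ, hρν, hρind, hρsum⟩ :=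
    ih _ (hn ▸ Set.ncard_lt_ncard hsupp (Set.toFinite _)) hν rfl
  exact ⟨ρ, hρ, hρν.trans hsupp.subset, hρind, hρsum.trans hsum⟩

end ConicCaratheodory

theorem LinearIndepOn.span_image_eq_top_of_finrank_le_ncard {K V ι : Type*} [DivisionRing K]
    [AddCommGroup V] [Module K V] [FiniteDimensional K V] {v : ι → V} {s : Set ι}
    (hv : LinearIndepOn K v s) (hs : s.Finite) (hcard : Module.finrank K V ≤ s.ncard) :
    Submodule.span K (v '' s) = ⊤ := by
  have := hs.fintype
  rw [Set.image_eq_range]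
  refine LinearIndependent.span_eq_top_of_card_eq_finrank' hv (le_antisymm ?_ ?_)
  · exact hv.fintype_card_le_finrank
  · rwa [← Nat.card_coe_set_eq, Nat.card_eq_fintype_card] at hcard

theorem stmt6_general (m n : ℕ) (γ : Fin m → (Fin (m - n) → ℝ)) (δ : Fin (m - n) → ℝ)
    (h2 : ∀ I : Finset (Fin m),
      (∃ μ : Fin m → ℝ, (∀ k, 0 ≤ μ k) ∧ (∀ k, k ∉ I → μ k = 0) ∧ ∑ k, μ k • γ k = δ) →
      m - n ≤ I.card)
    (z : Fin m → ℂ) (hz : ∑ k, (‖z k‖ ^ 2) • γ k = δ) :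
    Submodule.span ℝ (γ '' {k | z k ≠ 0}) = ⊤ := by
  classical
  obtain ⟨ν, hν, hsupp, hind, hsum⟩ :=
    exists_nonneg_linearIndepOn_support_sum_smul_eq γ (μ := fun k => ‖z k‖ ^ 2)
      fun k => by positivity
  have hcard : m - n ≤ (Function.support ν).toFinset.card :=
    h2 _ ⟨ν, hν, fun k hk => by simpa using hk, hsum.trans hz⟩
  have hspan := hind.span_image_eq_top_of_finrank_le_ncard (Set.toFinite _)
    (by rwa [Module.finrank_fin_fun, Set.ncard_eq_toFinset_card'])
  refine eq_top_mono (Submodule.span_mono (Set.image_mono fun k hk => ?_)) hspan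
  simpa using hsupp hk

/-- If `δ` lies in the cone generated by `γ₁,…,γₘ` and every subset of the `γ`'s
whose cone contains `δ` has at least `m - n` elements, then at each point `z` of
`Z = {z : Σₖ γₖ|zₖ|² = δ}` the vectors `{γₖ : zₖ ≠ 0}` span `ℝ^{m-n}`. -/
theorem stmt6 (m n : ℕ) (γ : Fin m → (Fin (m - n) → ℝ)) (δ : Fin (m - n) → ℝ)
    (h1 : ∃ μ : Fin m → ℝ, (∀ k, 0 ≤ μ k) ∧ ∑ k, μ k • γ k = δ)
    (h2 : ∀ I : Finset (Fin m),
      (∃ μ : Fin m → ℝ, (∀ k, 0 ≤ μ k) ∧ (∀ k, k ∉ I → μ k = 0) ∧ ∑ k, μ k • γ k = δ) →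
      m - n ≤ I.card)
    (z : Fin m → ℂ) (hz : ∑ k, (‖z k‖ ^ 2) • γ k = δ) :
    Submodule.span ℝ (γ '' {k | z k ≠ 0}) = ⊤ :=
  stmt6_general m n γ δ h2 z hz
end

section
/- Conversely, if δ lies in the cone generated by some m−n−1 of the vectors γ₁,…,γₘ (i.e., δ ∈ ℝ≥⟨γ_{i₁},…,γ_{i_{m−n−1}}⟩), then there exists a point z in Z = {z ∈ ℂᵐ : Σₖ γₖ|zₖ|² = δ} such that at least n+1 coordinates of z vanish and the set {γₖ : zₖ ≠ 0} does not span ℝ^{m−n}. -/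
/-!
Take `z k = √(μ k)` for the nonnegative coefficients `μ` that express `δ` over the cone on
`γ_I`. Then `Σ |z k|² γ k = Σ μ k γ k = δ`, and `z` is supported in `I`. Since
`#I = m - n - 1`, at least `n + 1` coordinates of `z` vanish, and the at most `m - n - 1`
vectors `γ k` with `z k ≠ 0` cannot span the `(m - n)`-dimensional space.
-/

open Finset Module

theorem Complex.norm_ofReal_sqrt_sq {x : ℝ} (hx : 0 ≤ x) : ‖((√x : ℝ) : ℂ)‖ ^ 2 = x := by
  rw [Complex.norm_real, Real.norm_of_nonneg (Real.sqrt_nonneg x), Real.sq_sqrt hx]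

theorem Set.card_sub_card_le_ncard_of_compl_subset {α : Type*} [Fintype α] {s : Set α}
    {I : Finset α} (h : sᶜ ⊆ I) : Fintype.card α - #I ≤ s.ncard := by
  have hcompl : sᶜ.ncard ≤ #I := by
    simpa only [Set.ncard_coe_finset] using Set.ncard_le_ncard h
  have := Set.ncard_add_ncard_compl s
  rw [Nat.card_eq_fintype_card] at this
  omega

theorem Submodule.span_image_ne_top_of_card_lt_finrank {R M ι : Type*} [Ring R]
    [StrongRankCondition R] [AddCommGroup M] [Module R M] (v : ι → M) {I : Finset ι}
    (h : #I < finrank R M) : span R (v '' I) ≠ ⊤ := by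
  classical
  intro htop
  have hle := finrank_span_finset_le_card (R := R) (I.image v)
  rw [Set.finrank, coe_image, htop, finrank_top] at hle
  have := card_image_le (s := I) (f := v)
  omega

/-- If `δ` lies in the cone generated by some `m - n - 1` of the vectors `γ₁,…,γₘ`,
then there is a point `z ∈ Z = {z : Σₖ γₖ|zₖ|² = δ}` with at least `n + 1` zero
coordinates, at which the vectors `{γₖ : zₖ ≠ 0}` do not span `ℝ^{m-n}`. -/
theorem stmt7 (m n : ℕ) (hn : n < m)
    (γ : Fin m → (Fin (m - n) → ℝ)) (δ : Fin (m - n) → ℝ)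
    (I : Finset (Fin m)) (hcard : I.card = m - n - 1)
    (hδ : ∃ μ : Fin m → ℝ, (∀ k, 0 ≤ μ k) ∧ (∀ k, k ∉ I → μ k = 0) ∧
      ∑ k, μ k • γ k = δ) :
    ∃ z : Fin m → ℂ, ∑ k, (‖z k‖ ^ 2) • γ k = δ ∧
      n + 1 ≤ {k | z k = 0}.ncard ∧
      Submodule.span ℝ (γ '' {k | z k ≠ 0}) ≠ ⊤ := by
  obtain ⟨μ, hμ_nonneg, hμ_supp, hμ_sum⟩ := hδ
  set z : Fin m → ℂ := fun k => (√(μ k) : ℝ)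
  have hz_supp : {k | z k ≠ 0} ⊆ I := fun k hk => by
    by_contra hkI
    simp [z, hμ_supp k hkI] at hk
  refine ⟨z, ?_, ?_, ?_⟩
  · simpa only [z, Complex.norm_ofReal_sqrt_sq (hμ_nonneg _)] using hμ_sum
  · have := Set.card_sub_card_le_ncard_of_compl_subset (s := {k | z k = 0}) hz_supp
    rw [Fintype.card_fin, hcard] at this
    omega
  · refine ne_top_of_le_ne_top ?_ (Submodule.span_mono (Set.image_mono hz_supp))
    apply Submodule.span_image_ne_top_of_card_lt_finrank
    rw [hcard, finrank_fin_fun]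
    omega
end

section
/- Let T_Γ = {(e^{2πi⟨γ₁,φ⟩},…,e^{2πi⟨γₘ,φ⟩}) : φ ∈ ℝ^{m−n}} ⊆ 𝕋ᵐ act coordinatewise on ℂᵐ, and let z ∈ ℂᵐ be such that the vectors {γₖ : zₖ ≠ 0} span ℝ^{m−n}, where γ₁,…,γₘ generate a full-rank lattice L in ℝ^{m−n}. Then the stabiliser of z in T_Γ is finite; explicitly it is L_z*/L*, where L_z = ℤ⟨γₖ : zₖ ≠ 0⟩ and L* denotes the dual lattice. -/
/-!
Since `e^{2πit} w = w` iff `w = 0` or `t ∈ ℤ`, the stabiliser of `z` is `L_z*`. The map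
`φ ↦ (⟨γₖ, φ⟩)_{zₖ ≠ 0}` is injective because the `γₖ` with `zₖ ≠ 0` span, and it sends `L_z*`
into `ℤᵐ`; so `L_z*` is discrete, hence finitely generated. The full-rank sublattice `L_z` of the
discrete group `L` has finite index `N` (the ratio of their covolumes), so `N • L_z* ⊆ L*`, and
`L_z*/L*` is a finitely generated torsion abelian group, hence finite.
-/

/-- `dualLat d m γ S` is the dual lattice of `ℤ⟨γₖ : k ∈ S⟩`; thus `L* = dualLat d m γ univ` and
`L_z* = dualLat d m γ {k | z k ≠ 0}`. -/
def dualLat (d m : ℕ) (γ : Fin m → (Fin d → ℝ)) (S : Set (Fin m)) :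
    AddSubgroup (Fin d → ℝ) where
  carrier := {φ | ∀ k ∈ S, ∃ r : ℤ, ∑ i, γ k i * φ i = (r : ℝ)}
  zero_mem' := by
    intro k _
    exact ⟨0, by simp⟩
  add_mem' := by
    intro φ ψ hφ hψ k hk
    obtain ⟨r, hr⟩ := hφ k hk
    obtain ⟨s, hs⟩ := hψ k hk
    refine ⟨r + s, ?_⟩
    push_cast
    rw [← hr, ← hs, ← Finset.sum_add_distrib]
    simp [Pi.add_apply, mul_add]
  neg_mem' := by
    intro φ hφ k hk
    obtain ⟨r, hr⟩ := hφ k hk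
    refine ⟨-r, ?_⟩
    push_cast
    rw [← hr, ← Finset.sum_neg_distrib]
    simp [mul_neg]

open Module Submodule Complex Real Matrix

theorem Complex.exp_two_pi_I_mul_mul_eq_self_iff {t : ℝ} {w : ℂ} :
    exp (((2 * π : ℝ) : ℂ) * I * t) * w = w ↔ w = 0 ∨ ∃ r : ℤ, t = r := by
  rw [mul_left_eq_self₀, exp_eq_one_iff, or_comm]
  refine or_congr_right (exists_congr fun r => ?_)
  rw [← ofReal_intCast, ← ofReal_inj]
  constructor <;> intro h
  · exact mul_left_cancel₀ two_pi_I_ne_zero (by push_cast at h ⊢; linear_combination h)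
  · push_cast [h]; ring

theorem ZLattice.exists_nsmul_mem_of_le {ι : Type*} [Fintype ι] {L₁ L₂ : Submodule ℤ (ι → ℝ)}
    [DiscreteTopology L₂] (hle : L₁ ≤ L₂) (hspan : span ℝ (L₁ : Set (ι → ℝ)) = ⊤) :
    ∃ n : ℕ, n ≠ 0 ∧ ∀ v ∈ L₂, n • v ∈ L₁ := by
  have : DiscreteTopology L₁ := DiscreteTopology.of_subset ‹_› hle
  have : IsZLattice ℝ L₁ := ⟨hspan⟩
  have : IsZLattice ℝ L₂ := ⟨eq_top_mono (span_mono hle) hspan⟩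
  refine ⟨L₁.toAddSubgroup.relIndex L₂.toAddSubgroup, fun h => ?_,
    fun v hv => AddSubgroup.nsmul_relIndex_mem L₁.toAddSubgroup (K := L₂.toAddSubgroup) hv⟩
  have := ZLattice.covolume_div_covolume_eq_relIndex L₁ L₂ hle
  rw [h, Nat.cast_zero] at this
  exact div_ne_zero (ZLattice.covolume_ne_zero L₁) (ZLattice.covolume_ne_zero L₂) this

theorem QuotientAddGroup.finite_of_nsmul_mem {G : Type*} [AddCommGroup G] [AddGroup.FG G]
    {H : AddSubgroup G} {n : ℕ} (hn : n ≠ 0) (h : ∀ x, n • x ∈ H) : Finite (G ⧸ H) := by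
  refine AddCommGroup.finite_of_fg_isAddTorsion _ fun q => ?_
  induction q using QuotientAddGroup.induction_on with | H x => ?_
  refine isOfFinAddOrder_iff_nsmul_eq_zero.mpr ⟨n, n.pos_of_ne_zero hn, ?_⟩
  rw [← QuotientAddGroup.mk_nsmul, QuotientAddGroup.eq_zero_iff]
  exact h x

section DualLattice

variable {d m : ℕ} (γ : Fin m → Fin d → ℝ) (S : Set (Fin m))

theorem mem_dualLat {φ : Fin d → ℝ} :
    φ ∈ dualLat d m γ S ↔ ∀ k ∈ S, ∃ r : ℤ, γ k ⬝ᵥ φ = r :=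
  Iff.rfl

theorem stabilizer_eq_dualLat (z : Fin m → ℂ) :
    {φ : Fin d → ℝ | ∀ k, exp (((2 * π : ℝ) : ℂ) * I * ((∑ i, γ k i * φ i : ℝ) : ℂ)) * z k = z k}
      = (dualLat d m γ {k | z k ≠ 0} : Set (Fin d → ℝ)) := by
  ext φ
  refine forall_congr' fun k => ?_
  rw [exp_two_pi_I_mul_mul_eq_self_iff, or_iff_not_imp_left]
  rfl

noncomputable def pairingMap : (Fin d → ℝ) →ₗ[ℝ] (Fin m → ℝ) :=
  (Matrix.of (S.indicator γ)).mulVecLin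

theorem pairingMap_apply (φ : Fin d → ℝ) (k : Fin m) :
    pairingMap γ S φ k = S.indicator γ k ⬝ᵥ φ :=
  rfl

theorem dualLat_toIntSubmodule :
    (dualLat d m γ S).toIntSubmodule =
      ZLattice.comap ℝ (span ℤ (Set.range (Pi.basisFun ℝ (Fin m)))) (pairingMap γ S) := by
  ext φ
  change φ ∈ dualLat d m γ S ↔ pairingMap γ S φ ∈ span ℤ (Set.range (Pi.basisFun ℝ (Fin m)))
  rw [Basis.mem_span_iff_repr_mem, mem_dualLat]
  refine forall_congr' fun k => ?_
  by_cases hk : k ∈ S <;> simp [pairingMap_apply, hk, eq_comm]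

variable {γ S}

theorem pairingMap_injective (hS : span ℝ (γ '' S) = ⊤) : Function.Injective (pairingMap γ S) := by
  rw [← LinearMap.ker_eq_bot, eq_bot_iff]
  intro φ hφ
  have hγφ : span ℝ (γ '' S) ≤ LinearMap.ker (dotProductBilin ℝ ℝ |>.flip φ) := by
    rw [span_le]
    rintro _ ⟨k, hk, rfl⟩
    simpa [pairingMap_apply, hk] using congrFun hφ k
  rw [hS] at hγφ
  exact dotProduct_self_eq_zero.mp (hγφ mem_top)

theorem dualLat_fg (hS : span ℝ (γ '' S) = ⊤) : AddGroup.FG (dualLat d m γ S) := by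
  have : DiscreteTopology (dualLat d m γ S).toIntSubmodule := by
    rw [dualLat_toIntSubmodule]
    exact ZLattice.comap_discreteTopology ℝ _ (LinearMap.continuous_of_finiteDimensional _)
      (pairingMap_injective hS)
  exact Module.Finite.iff_addGroup_fg.mp
    (inferInstanceAs (Module.Finite ℤ (dualLat d m γ S).toIntSubmodule))

theorem exists_intCast_eq_dotProduct_of_mem_span {φ : Fin d → ℝ} (hφ : φ ∈ dualLat d m γ S)
    {v : Fin d → ℝ} (hv : v ∈ span ℤ (γ '' S)) : ∃ r : ℤ, v ⬝ᵥ φ = r := by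
  induction hv using span_induction with
  | mem _ hv => obtain ⟨k, hk, rfl⟩ := hv; exact hφ k hk
  | zero => exact ⟨0, by simp⟩
  | add v w _ _ hv hw =>
    obtain ⟨r, hr⟩ := hv
    obtain ⟨s, hs⟩ := hw
    exact ⟨r + s, by simp [add_dotProduct, hr, hs]⟩
  | smul a v _ hv =>
    obtain ⟨r, hr⟩ := hv
    refine ⟨a * r, ?_⟩
    rw [← Int.cast_smul_eq_zsmul ℝ, smul_dotProduct, hr, smul_eq_mul, Int.cast_mul]

theorem nsmul_mem_dualLat_univ {n : ℕ} (hn : ∀ k, n • γ k ∈ span ℤ (γ '' S))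
    {φ : Fin d → ℝ} (hφ : φ ∈ dualLat d m γ S) : n • φ ∈ dualLat d m γ Set.univ := by
  intro k _
  obtain ⟨r, hr⟩ := exists_intCast_eq_dotProduct_of_mem_span hφ (hn k)
  exact ⟨r, by rw [← hr, smul_dotProduct]; exact dotProduct_smul n (γ k) φ⟩

end DualLattice

theorem stmt12_general (d m : ℕ) (γ : Fin m → (Fin d → ℝ)) (z : Fin m → ℂ)
    (hdisc : DiscreteTopology (AddSubgroup.closure (Set.range γ) : AddSubgroup (Fin d → ℝ)))
    (hz : Submodule.span ℝ (γ '' {k | z k ≠ 0}) = ⊤) :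
    {φ : Fin d → ℝ | ∀ k, Complex.exp (((2 * Real.pi : ℝ) : ℂ) * Complex.I *
        ((∑ i, γ k i * φ i : ℝ) : ℂ)) * z k = z k}
      = (dualLat d m γ {k | z k ≠ 0} : Set (Fin d → ℝ)) ∧
    Finite ((dualLat d m γ {k | z k ≠ 0}) ⧸
      ((dualLat d m γ Set.univ).addSubgroupOf (dualLat d m γ {k | z k ≠ 0}))) := by
  refine ⟨stabilizer_eq_dualLat γ z, ?_⟩
  rw [← span_int_eq_addSubgroupClosure] at hdisc
  obtain ⟨n, hn, hnγ⟩ := ZLattice.exists_nsmul_mem_of_le (L₂ := span ℤ (Set.range γ))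
    (span_mono (Set.image_subset_range γ _)) (by rwa [span_span_of_tower])
  have := dualLat_fg hz
  exact QuotientAddGroup.finite_of_nsmul_mem hn fun φ =>
    nsmul_mem_dualLat_univ (fun k => hnγ _ (subset_span ⟨k, rfl⟩)) φ.2

/-- Let `γ₁,…,γₘ` generate a full-rank lattice `L` in `ℝᵈ` (`d = m - n`), acting on
`ℂᵐ` by `φ · z = (e^{2πi⟨γ₁,φ⟩}z₁, …, e^{2πi⟨γₘ,φ⟩}zₘ)`.  If the vectors
`{γₖ : zₖ ≠ 0}` span `ℝᵈ`, then the stabiliser of `z` (the set of `φ` fixing `z`)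
is exactly the dual lattice `L_z*` of `L_z = ℤ⟨γₖ : zₖ ≠ 0⟩`, and the quotient
`L_z*/L*` is finite. -/
theorem stmt12 (d m : ℕ) (γ : Fin m → (Fin d → ℝ)) (z : Fin m → ℂ)
    (hdisc : DiscreteTopology (AddSubgroup.closure (Set.range γ) : AddSubgroup (Fin d → ℝ)))
    (hfull : Submodule.span ℝ (Set.range γ) = ⊤)
    (hz : Submodule.span ℝ (γ '' {k | z k ≠ 0}) = ⊤) :
    {φ : Fin d → ℝ | ∀ k, Complex.exp (((2 * Real.pi : ℝ) : ℂ) * Complex.I *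
        ((∑ i, γ k i * φ i : ℝ) : ℂ)) * z k = z k}
      = (dualLat d m γ {k | z k ≠ 0} : Set (Fin d → ℝ)) ∧
    Finite ((dualLat d m γ {k | z k ≠ 0}) ⧸
      ((dualLat d m γ Set.univ).addSubgroupOf (dualLat d m γ {k | z k ≠ 0}))) :=
  stmt12_general d m γ z hdisc hz
end

section
/- Let a₁,…,aₘ ∈ ℝⁿ and let A : ℝᵐ → ℝⁿ be the linear map eᵢ ↦ aᵢ. Define R = exp(ker A) = {(e^{y₁},…,e^{yₘ}) : y ∈ ker A} ⊆ ℝᵐ_{>0}. Suppose K is a simplicial complex on [m] such that {aᵢ : i ∈ I} is linearly independent for every I ∈ K. Then the coordinatewise multiplication action of R on U(K) = ⋃_{I∈K}(ℂ,ℂ×)^I is free. -/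
/-!
If `(e^{y_k}) z = z` then `y_k = 0` wherever `z_k ≠ 0`, so `y` is supported on the simplex `I`
with `z ∈ (ℂ, ℂ×)^I`. Then `0 = A y = ∑_{i ∈ I} y_i a_i`, and linear independence of
`{a_i : i ∈ I}` forces `y = 0`.
-/

theorem Real.eq_zero_of_exp_mul_eq_self {t : ℝ} {w : ℂ} (hw : w ≠ 0)
    (h : (Real.exp t : ℂ) * w = w) : t = 0 := by
  rw [mul_eq_right₀ hw, Complex.ofReal_eq_one, Real.exp_eq_one_iff] at h
  exact h

theorem LinearMap.eq_zero_of_apply_eq_zero_of_support_subset {ι R M : Type*} [Fintype ι]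
    [DecidableEq ι] [Ring R] [AddCommGroup M] [Module R M] (A : (ι → R) →ₗ[R] M) (I : Finset ι)
    (hI : LinearIndependent R (fun i : I => A (Pi.single i.1 1)))
    {y : ι → R} (hy : A y = 0) (hsupp : ∀ j ∉ I, y j = 0) : y = 0 := by
  have hAy : A y = ∑ i, y i • A (Pi.single i 1) := by
    conv_lhs => rw [pi_eq_sum_univ' y]
    simp only [map_sum, map_smul]
  have hsum : ∑ i : I, y i • A (Pi.single i.1 1) = 0 := by
    rw [Finset.sum_coe_sort I (fun i => y i • A (Pi.single i 1)), ← hy, hAy]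
    exact Finset.sum_subset (Finset.subset_univ I) fun j _ hj => by rw [hsupp j hj, zero_smul]
  have hI_zero := Fintype.linearIndependent_iff.mp hI (fun i => y i) hsum
  funext j
  by_cases hj : j ∈ I
  · exact hI_zero ⟨j, hj⟩
  · exact hsupp j hj

/-- Freeness of the action of `R = exp(ker A)` on `U(K)`.  If
`{aᵢ : i ∈ I}` is linearly independent for every simplex `I ∈ K`, `A y = 0`, and
the element `(e^{y₁},…,e^{yₘ}) ∈ R` fixes some point `z ∈ U(K)`, then `y = 0`. -/
theorem stmt16 (m n : ℕ) (a : Fin m → (Fin n → ℝ))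
    (A : (Fin m → ℝ) →ₗ[ℝ] (Fin n → ℝ)) (hA : ∀ i, A (Pi.single i 1) = a i)
    (K : Set (Finset (Fin m)))
    (hind : ∀ I ∈ K, LinearIndependent ℝ (fun i : I => a i.1))
    (y : Fin m → ℝ) (hy : A y = 0)
    (z : Fin m → ℂ)
    (hz : z ∈ ⋃ I ∈ K, {z : Fin m → ℂ | ∀ j ∉ I, z j ≠ 0})
    (hfix : ∀ k, ((Real.exp (y k) : ℝ) : ℂ) * z k = z k) :
    y = 0 := by
  simp only [Set.mem_iUnion] at hz
  obtain ⟨I, hIK, hzI⟩ := hz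
  refine A.eq_zero_of_apply_eq_zero_of_support_subset I ?_ hy
    fun j hj => Real.eq_zero_of_exp_mul_eq_self (hzI j hj) (hfix j)
  simpa only [hA] using hind I hIK
end

section
/- Let R(p,q) = {u ∈ ℝᵐ : Σₖ γ₁ₖuₖ² = c, Σₖ γ₂ₖuₖ² = 0} where c > 0, γ₁ₖ > 0 for all k, γ₂ₖ > 0 for k ≤ p and γ₂ₖ < 0 for k > p, with 0 < p < m. Then R(p,q) is homeomorphic to S^{p−1} × S^{q−1} where q = m − p. -/
/-!
Write `x`, `y` for the first `p` and the last `q` coordinates and `C` for the cone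
`Σ_{k<p} γ₂ₖ xₖ² = Σ_{k≥p} (-γ₂ₖ) yₖ²`. On `C` both `√(Σ γ₁ₖ uₖ² / c)` and `√(Σ_{k<p} γ₂ₖ xₖ²)`
are continuous, positively homogeneous of degree one and positive away from `0`, so radial
projection along `C` is a homeomorphism between their unit level sets: `R(p,q)` and a product
of two ellipsoids. Radial projection in `ℝᵖ` and in `ℝ^q` then takes each ellipsoid to the
round sphere.
-/

section WeightedSumSq

variable {ι : Type*} [Fintype ι]

def weightedSumSq (w x : ι → ℝ) : ℝ := ∑ i, w i * x i ^ 2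

variable {w : ι → ℝ}

@[fun_prop]
lemma continuous_weightedSumSq (w : ι → ℝ) : Continuous (weightedSumSq w) := by
  unfold weightedSumSq; fun_prop

lemma weightedSumSq_smul (w : ι → ℝ) (t : ℝ) (x : ι → ℝ) :
    weightedSumSq w (t • x) = t ^ 2 * weightedSumSq w x := by
  simp only [weightedSumSq, Finset.mul_sum, Pi.smul_apply, smul_eq_mul]
  exact Finset.sum_congr rfl fun i _ => by ring

lemma weightedSumSq_zero (w : ι → ℝ) : weightedSumSq w 0 = 0 := by
  simp [weightedSumSq]

lemma weightedSumSq_neg (w x : ι → ℝ) : weightedSumSq (-w) x = -weightedSumSq w x := by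
  simp [weightedSumSq]

lemma weightedSumSq_nonneg (hw : ∀ i, 0 ≤ w i) (x : ι → ℝ) : 0 ≤ weightedSumSq w x :=
  Finset.sum_nonneg fun i _ => mul_nonneg (hw i) (sq_nonneg _)

lemma weightedSumSq_pos (hw : ∀ i, 0 < w i) {x : ι → ℝ} (hx : x ≠ 0) :
    0 < weightedSumSq w x := by
  obtain ⟨i, hi⟩ := Function.ne_iff.mp hx
  exact Finset.sum_pos' (fun j _ => mul_nonneg (hw j).le (sq_nonneg _))
    ⟨i, Finset.mem_univ i, mul_pos (hw i) (sq_pos_of_ne_zero hi)⟩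

lemma weightedSumSq_eq_zero_iff (hw : ∀ i, 0 < w i) {x : ι → ℝ} :
    weightedSumSq w x = 0 ↔ x = 0 :=
  ⟨fun h => by_contra fun hx => (weightedSumSq_pos hw hx).ne' h,
    fun h => h ▸ weightedSumSq_zero w⟩

lemma weightedSumSq_eq_castAdd_add_natAdd {p q : ℕ} (w x : Fin (p + q) → ℝ) :
    weightedSumSq w x =
      weightedSumSq (fun i => w (Fin.castAdd q i)) (fun i => x (Fin.castAdd q i)) +
        weightedSumSq (fun j => w (Fin.natAdd p j)) (fun j => x (Fin.natAdd p j)) :=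
  Fin.sum_univ_add _

end WeightedSumSq

section ConeGauge

variable {E : Type*} [AddCommGroup E] [Module ℝ E] [TopologicalSpace E]

structure IsConeGauge (C : Set E) (f : E → ℝ) : Prop where
  continuous : Continuous f
  smul : ∀ t : ℝ, 0 < t → ∀ x, f (t • x) = t * f x
  pos : ∀ x ∈ C, x ≠ 0 → 0 < f x

variable {C : Set E} {f g : E → ℝ}

lemma isConeGauge_sqrt {Q : E → ℝ} (hQ : Continuous Q)
    (hsmul : ∀ (t : ℝ) x, Q (t • x) = t ^ 2 * Q x)
    (hpos : ∀ x ∈ C, x ≠ 0 → 0 < Q x) : IsConeGauge C fun x => √(Q x) where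
  continuous := by fun_prop
  smul t ht x := by rw [hsmul, Real.sqrt_mul (sq_nonneg t), Real.sqrt_sq ht.le]
  pos x hx hx0 := Real.sqrt_pos.2 (hpos x hx hx0)

namespace IsConeGauge

lemma map_zero (hf : IsConeGauge C f) : f 0 = 0 := by
  have h := hf.smul 2 two_pos 0
  rw [smul_zero] at h
  linarith

lemma ne_zero_of_eq_one (hf : IsConeGauge C f) {x : E} (hx : f x = 1) : x ≠ 0 := by
  rintro rfl
  simp [hf.map_zero] at hx

noncomputable def radialProj (hC : ∀ x ∈ C, ∀ t : ℝ, 0 < t → t • x ∈ C) (hf : IsConeGauge C f)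
    (hg : IsConeGauge C g) (x : {x // x ∈ C ∧ f x = 1}) : {x // x ∈ C ∧ g x = 1} :=
  have hgx : 0 < g x := hg.pos x x.2.1 (hf.ne_zero_of_eq_one x.2.2)
  ⟨(g x)⁻¹ • (x : E), hC _ x.2.1 _ (inv_pos.2 hgx),
    by rw [hg.smul _ (inv_pos.2 hgx), inv_mul_cancel₀ hgx.ne']⟩

lemma radialProj_radialProj (hC : ∀ x ∈ C, ∀ t : ℝ, 0 < t → t • x ∈ C) (hf : IsConeGauge C f)
    (hg : IsConeGauge C g) (x : {x // x ∈ C ∧ f x = 1}) :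
    radialProj hC hg hf (radialProj hC hf hg x) = x := by
  have hgx : 0 < g x := hg.pos x x.2.1 (hf.ne_zero_of_eq_one x.2.2)
  apply Subtype.ext
  simp only [radialProj, hf.smul _ (inv_pos.2 hgx), x.2.2, mul_one, inv_inv, smul_smul,
    mul_inv_cancel₀ hgx.ne', one_smul]

lemma continuous_radialProj [ContinuousSMul ℝ E] (hC : ∀ x ∈ C, ∀ t : ℝ, 0 < t → t • x ∈ C)
    (hf : IsConeGauge C f) (hg : IsConeGauge C g) : Continuous (radialProj hC hf hg) := by
  have := hg.continuous
  refine Continuous.subtype_mk (Continuous.smul (Continuous.inv₀ (by fun_prop) fun x => ?_)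
    continuous_subtype_val) _
  exact (hg.pos x x.2.1 (hf.ne_zero_of_eq_one x.2.2)).ne'

noncomputable def levelSetHomeomorph [ContinuousSMul ℝ E] (hC : ∀ x ∈ C, ∀ t : ℝ, 0 < t → t • x ∈ C)
    (hf : IsConeGauge C f) (hg : IsConeGauge C g) :
    {x // x ∈ C ∧ f x = 1} ≃ₜ {x // x ∈ C ∧ g x = 1} where
  toFun := radialProj hC hf hg
  invFun := radialProj hC hg hf
  left_inv := radialProj_radialProj hC hf hg
  right_inv := radialProj_radialProj hC hg hf
  continuous_toFun := continuous_radialProj hC hf hg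
  continuous_invFun := continuous_radialProj hC hg hf

end IsConeGauge

end ConeGauge

section Ellipsoid

variable {ι : Type*} [Fintype ι]

lemma isConeGauge_norm_toLp :
    IsConeGauge (Set.univ : Set (ι → ℝ)) fun x => ‖WithLp.toLp 2 x‖ where
  continuous := by fun_prop
  smul t ht x := by rw [WithLp.toLp_smul, norm_smul, Real.norm_of_nonneg ht.le]
  pos x _ hx := norm_pos_iff.2 fun h => hx (by simpa using h)

noncomputable def ellipsoidHomeomorphSphere {w : ι → ℝ} (hw : ∀ i, 0 < w i) :
    {x : ι → ℝ // weightedSumSq w x = 1} ≃ₜ Metric.sphere (0 : EuclideanSpace ℝ ι) 1 :=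
  ((Homeomorph.refl _).subtype fun x => by simp [Real.sqrt_eq_one]).trans <|
    ((isConeGauge_sqrt (continuous_weightedSumSq w) (weightedSumSq_smul w)
      fun _ _ hx => weightedSumSq_pos hw hx).levelSetHomeomorph (by simp)
        isConeGauge_norm_toLp).trans <|
    (PiLp.homeomorph 2 _).symm.subtype fun x => by
      simp only [Set.mem_univ, true_and, mem_sphere_zero_iff_norm]
      rfl

end Ellipsoid

section Quadric

variable {ι κ : Type*} [Fintype ι] [Fintype κ] {α δ : ι → ℝ} {β ε : κ → ℝ} {c : ℝ}

lemma weightedSumSq_add_weightedSumSq_pos (hα : ∀ i, 0 < α i) (hβ : ∀ j, 0 < β j)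
    {z : (ι → ℝ) × (κ → ℝ)} (hz : z ≠ 0) : 0 < weightedSumSq α z.1 + weightedSumSq β z.2 := by
  obtain hx | hy : z.1 ≠ 0 ∨ z.2 ≠ 0 := by
    by_contra! h
    exact hz (Prod.ext h.1 h.2)
  · exact add_pos_of_pos_of_nonneg (weightedSumSq_pos hα hx)
      (weightedSumSq_nonneg (fun j => (hβ j).le) _)
  · exact add_pos_of_nonneg_of_pos (weightedSumSq_nonneg (fun i => (hα i).le) _)
      (weightedSumSq_pos hβ hy)

lemma weightedSumSq_fst_pos_of_eq (hδ : ∀ i, 0 < δ i) (hε : ∀ j, 0 < ε j)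
    {z : (ι → ℝ) × (κ → ℝ)} (hz : weightedSumSq δ z.1 = weightedSumSq ε z.2) (hz0 : z ≠ 0) :
    0 < weightedSumSq δ z.1 := by
  refine weightedSumSq_pos hδ fun hx => hz0 (Prod.ext hx ((weightedSumSq_eq_zero_iff hε).1 ?_))
  rw [← hz, hx, weightedSumSq_zero]

noncomputable def quadricHomeomorphSphereProd (hc : 0 < c) (hα : ∀ i, 0 < α i) (hβ : ∀ j, 0 < β j)
    (hδ : ∀ i, 0 < δ i) (hε : ∀ j, 0 < ε j) :
    {z : (ι → ℝ) × (κ → ℝ) // weightedSumSq α z.1 + weightedSumSq β z.2 = c ∧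
        weightedSumSq δ z.1 = weightedSumSq ε z.2} ≃ₜ
      Metric.sphere (0 : EuclideanSpace ℝ ι) 1 × Metric.sphere (0 : EuclideanSpace ℝ κ) 1 :=
  let C := {z : (ι → ℝ) × (κ → ℝ) | weightedSumSq δ z.1 = weightedSumSq ε z.2}
  have hC : ∀ z ∈ C, ∀ t : ℝ, 0 < t → t • z ∈ C := fun z hz t _ => by
    simp only [C, Set.mem_ofPred_eq, Prod.smul_fst, Prod.smul_snd, weightedSumSq_smul] at hz ⊢
    rw [hz]
  have hf : IsConeGauge C fun z => √((weightedSumSq α z.1 + weightedSumSq β z.2) / c) :=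
    isConeGauge_sqrt (by fun_prop)
      (fun t z => by simp only [Prod.smul_fst, Prod.smul_snd, weightedSumSq_smul]; ring)
      fun _ _ hz => div_pos (weightedSumSq_add_weightedSumSq_pos hα hβ hz) hc
  have hg : IsConeGauge C fun z => √(weightedSumSq δ z.1) :=
    isConeGauge_sqrt (by fun_prop) (fun t z => weightedSumSq_smul δ t z.1)
      fun _ hz hz0 => weightedSumSq_fst_pos_of_eq hδ hε hz hz0
  ((Homeomorph.refl _).subtype fun z => by
      simp [C, Real.sqrt_eq_one, div_eq_one_iff_eq hc.ne', and_comm]).trans <|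
    (hf.levelSetHomeomorph hC hg).trans <|
    ((Homeomorph.refl _).subtype fun z => by
      simp only [C, Set.mem_ofPred_eq, Real.sqrt_eq_one, Set.mem_prod, Homeomorph.refl_apply, id]
      exact ⟨fun ⟨h, h1⟩ => ⟨h1, h ▸ h1⟩, fun ⟨h1, h2⟩ => ⟨h1.trans h2.symm, h1⟩⟩).trans <|
    (Homeomorph.Set.prod {x | weightedSumSq δ x = 1} {y | weightedSumSq ε y = 1}).trans <|
    (ellipsoidHomeomorphSphere hδ).prodCongr (ellipsoidHomeomorphSphere hε)

end Quadric

theorem stmt18_general (m p q : ℕ) (hpm : p < m) (hq : q = m - p)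
    (γ₁ γ₂ : Fin m → ℝ) (c : ℝ) (hc : 0 < c)
    (h1 : ∀ k, 0 < γ₁ k)
    (h2p : ∀ k : Fin m, (k : ℕ) < p → 0 < γ₂ k)
    (h2q : ∀ k : Fin m, p ≤ (k : ℕ) → γ₂ k < 0) :
    Nonempty ({u : Fin m → ℝ // ∑ k, γ₁ k * u k ^ 2 = c ∧ ∑ k, γ₂ k * u k ^ 2 = 0}
      ≃ₜ (↥(Metric.sphere (0 : EuclideanSpace ℝ (Fin p)) 1) ×
          ↥(Metric.sphere (0 : EuclideanSpace ℝ (Fin q)) 1))) := by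
  obtain rfl : m = p + q := by omega
  refine ⟨((Fin.appendHomeomorph p q).symm.subtype fun u => ?_).trans
    (quadricHomeomorphSphereProd (ε := -fun j => γ₂ (Fin.natAdd p j)) hc
      (fun i => h1 (Fin.castAdd q i)) (fun j => h1 (Fin.natAdd p j))
      (fun i => h2p (Fin.castAdd q i) (by simp))
      fun j => neg_pos.2 (h2q (Fin.natAdd p j) (by simp)))⟩
  change weightedSumSq γ₁ u = c ∧ weightedSumSq γ₂ u = 0 ↔ _
  rw [weightedSumSq_eq_castAdd_add_natAdd γ₁, weightedSumSq_eq_castAdd_add_natAdd γ₂,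
    weightedSumSq_neg, eq_neg_iff_add_eq_zero]
  rfl

/-- The intersection of two real quadrics
`R(p,q) = {u ∈ ℝᵐ : Σₖ γ₁ₖuₖ² = c, Σₖ γ₂ₖuₖ² = 0}` with `c > 0`, all `γ₁ₖ > 0`,
`γ₂ₖ > 0` for `k < p` and `γ₂ₖ < 0` for `k ≥ p` (`0 < p < m`, `q = m - p`)
is homeomorphic to `S^{p-1} × S^{q-1}`. -/
theorem stmt18 (m p q : ℕ) (hp : 0 < p) (hpm : p < m) (hq : q = m - p)
    (γ₁ γ₂ : Fin m → ℝ) (c : ℝ) (hc : 0 < c)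
    (h1 : ∀ k, 0 < γ₁ k)
    (h2p : ∀ k : Fin m, (k : ℕ) < p → 0 < γ₂ k)
    (h2q : ∀ k : Fin m, p ≤ (k : ℕ) → γ₂ k < 0) :
    Nonempty ({u : Fin m → ℝ // ∑ k, γ₁ k * u k ^ 2 = c ∧ ∑ k, γ₂ k * u k ^ 2 = 0}
      ≃ₜ (↥(Metric.sphere (0 : EuclideanSpace ℝ (Fin p)) 1) ×
          ↥(Metric.sphere (0 : EuclideanSpace ℝ (Fin q)) 1))) :=
  stmt18_general m p q hpm hq γ₁ γ₂ c hc h1 h2p h2q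
end

section
/- Let N ⊆ ℂᵐ be the image of the map j : R × T_Γ → ℂᵐ, (u,φ) ↦ (u₁e^{2πi⟨γ₁,φ⟩},…,uₘe^{2πi⟨γₘ,φ⟩}), where R = {u ∈ ℝᵐ : Σₖ γₖuₖ² = δ}. Then N is contained in Z = {z ∈ ℂᵐ : Σₖ γₖ|zₖ|² = δ}, and at every point of the form j(u,φ) with all uₖ ≠ 0, the image under j of the tangent space is an isotropic subspace for the standard symplectic form ω = 2Σₖ dxₖ∧dyₖ on ℂᵐ (i.e., j is a Lagrangian immersion at such points). -/
/-! Since `|e^{iθ}| = 1`, the torus factor drops out of `|zₖ|²` and of the Hermitian product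
`⟨Dj(v,ψ), Dj(v',ψ')⟩`. What remains has imaginary part `2π Σₖ uₖ(vₖ⟨γₖ,ψ'⟩ - v'ₖ⟨γₖ,ψ⟩)`,
and each of the two sums is the pairing of `Σₖ uₖvₖγₖ = 0` (resp. `Σₖ uₖv'ₖγₖ = 0`), the
derivative of the quadric equation along a tangent vector of `R`, with `ψ'` (resp. `ψ`). -/

open Complex

lemma norm_exp_ofReal_mul_I_mul_ofReal (a r : ℝ) : ‖exp ((a : ℂ) * I * (r : ℂ))‖ = 1 := by
  rw [show (a : ℂ) * I * (r : ℂ) = ((a * r : ℝ) : ℂ) * I by push_cast; ring]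
  exact norm_exp_ofReal_mul_I _

lemma conj_mul_mul_mul_of_norm_eq_one {e : ℂ} (he : ‖e‖ = 1) (z w : ℂ) :
    starRingEnd ℂ (z * e) * (w * e) = starRingEnd ℂ z * w := by
  have hee : starRingEnd ℂ e * e = 1 := by rw [conj_mul', he]; norm_num
  rw [map_mul]
  linear_combination starRingEnd ℂ z * w * hee

lemma im_conj_mul_add_mul_I (a s s' u v v' : ℝ) :
    (starRingEnd ℂ ((v : ℂ) + a * I * s * u) * ((v' : ℂ) + a * I * s' * u)).im
      = a * (u * v * s' - u * v' * s) := by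
  simp only [map_add, map_mul, conj_ofReal, conj_I, mul_im, mul_re, add_re, add_im,
    ofReal_re, ofReal_im, I_re, I_im, neg_re, neg_im]
  ring

lemma sum_mul_dotProduct_eq_zero {m d : ℕ} {γ : Fin m → Fin d → ℝ} {c : Fin m → ℝ}
    (h : ∑ k, c k • γ k = 0) (χ : Fin d → ℝ) :
    ∑ k, c k * ∑ i, γ k i * χ i = 0 := by
  have := congrArg (· ⬝ᵥ χ) h
  simp only [sum_dotProduct, smul_dotProduct, zero_dotProduct, smul_eq_mul] at this
  exact this

-- `Dj(v,ψ)ₖ = (vₖ + 2πi⟨γₖ,ψ⟩uₖ)e^{2πi⟨γₖ,φ⟩}` and `ω(ξ,η) = 2·Im⟨ξ,η⟩_ℂ`.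
/-- The map `j : R × T_Γ → ℂᵐ`, `(u,φ) ↦ (uₖ e^{2πi⟨γₖ,φ⟩})ₖ`, where
`R = {u ∈ ℝᵐ : Σₖ uₖ² γₖ = δ}`.  Its image is contained in the intersection of
Hermitian quadrics `Z = {z : Σₖ |zₖ|² γₖ = δ}`, and at every point `j(u,φ)` with
all `uₖ ≠ 0` the image of the differential of `j` (spanned by the vectors
`Dj(v,ψ)ₖ = (vₖ + 2πi⟨γₖ,ψ⟩uₖ)e^{2πi⟨γₖ,φ⟩}` for `(v,ψ)` tangent to `R × T_Γ`)
is isotropic for the standard symplectic form `ω(ξ,η) = 2·Im⟨ξ,η⟩_ℂ` on `ℂᵐ`: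
`j` is a Lagrangian immersion at such points. -/
theorem stmt19 (m d : ℕ) (γ : Fin m → (Fin d → ℝ)) (δ : Fin d → ℝ)
    (jmap : (Fin m → ℝ) → (Fin d → ℝ) → (Fin m → ℂ))
    (hj : ∀ u φ k, jmap u φ k = ((u k : ℝ) : ℂ) *
      Complex.exp (((2 * Real.pi : ℝ) : ℂ) * Complex.I * ((∑ i, γ k i * φ i : ℝ) : ℂ))) :
    (∀ (u : Fin m → ℝ) (φ : Fin d → ℝ),
      ∑ k, (u k ^ 2) • γ k = δ → ∑ k, (‖jmap u φ k‖ ^ 2) • γ k = δ) ∧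
    (∀ (u : Fin m → ℝ) (φ : Fin d → ℝ), (∀ k, u k ≠ 0) →
      ∑ k, (u k ^ 2) • γ k = δ →
      ∀ (v v' : Fin m → ℝ) (ψ ψ' : Fin d → ℝ),
        ∑ k, (u k * v k) • γ k = 0 → ∑ k, (u k * v' k) • γ k = 0 →
        (2 : ℝ) * (∑ k,
          (starRingEnd ℂ) ((((v k : ℝ) : ℂ) +
              ((2 * Real.pi : ℝ) : ℂ) * Complex.I * ((∑ i, γ k i * ψ i : ℝ) : ℂ) * ((u k : ℝ) : ℂ)) *
            Complex.exp (((2 * Real.pi : ℝ) : ℂ) * Complex.I * ((∑ i, γ k i * φ i : ℝ) : ℂ))) *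
          ((((v' k : ℝ) : ℂ) +
              ((2 * Real.pi : ℝ) : ℂ) * Complex.I * ((∑ i, γ k i * ψ' i : ℝ) : ℂ) * ((u k : ℝ) : ℂ)) *
            Complex.exp (((2 * Real.pi : ℝ) : ℂ) * Complex.I * ((∑ i, γ k i * φ i : ℝ) : ℂ)))).im
          = 0) := by
  refine ⟨fun u φ hu => ?_, fun u φ _ _ v v' ψ ψ' hv hv' => ?_⟩
  · have hnorm : ∀ k, ‖jmap u φ k‖ ^ 2 = u k ^ 2 := fun k => by
      rw [hj, norm_mul, norm_exp_ofReal_mul_I_mul_ofReal, mul_one, norm_real, Real.norm_eq_abs,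
        sq_abs]
    simpa only [hnorm] using hu
  · have hψ' := sum_mul_dotProduct_eq_zero hv ψ'
    have hψ := sum_mul_dotProduct_eq_zero hv' ψ
    simp only [conj_mul_mul_mul_of_norm_eq_one (norm_exp_ofReal_mul_I_mul_ofReal _ _), im_sum,
      im_conj_mul_add_mul_I, ← Finset.mul_sum, Finset.sum_sub_distrib]
    simp only [mul_assoc] at hψ hψ' ⊢
    rw [hψ, hψ']; ring
end
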